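/- If M is an irreducible generator matrix (nonnegative off-diagonal entries, zero row sums, irreducible), then the system xM = 0, x𝟏 = 1 has a unique solution x, and this x has strictly positive entries. -/

import Mathlib

/-!
When `M` has nonnegative off-diagonal entries and zero row sums, `|x|` is a left null vector
whenever `x` is: the triangle inequality makes `|x| ᵥ* M` entrywise nonnegative, and its
entries sum to `|x| ⬝ᵥ (M *ᵥ 1) = 0`. A nonnegative left null vector vanishing at `j` also
vanishes at every `i` with `M i j > 0`, so by strong connectivity it is either zero or strictly
positive. Applied to `|x| + x` and `|x| - x`, this shows that every nonzero left null vector has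
entries of one strict sign. Hence `∑ i, x i = 1` singles out at most one left null vector,
which is positive, and one exists because `M *ᵥ 1 = 0` forces `det M = 0`.
-/

open Matrix Finset

namespace Matrix

variable {ι R : Type*} [Fintype ι]

structure IsGenerator [AddCommMonoid R] [LE R] (M : Matrix ι ι R) : Prop where
  offDiag_nonneg : ∀ i j, i ≠ j → 0 ≤ M i j
  sum_row_eq_zero : ∀ i, ∑ j, M i j = 0

def OffDiagStronglyConnected [Zero R] [LT R] (M : Matrix ι ι R) : Prop :=
  ∀ i j, i ≠ j → Relation.TransGen (fun a b => a ≠ b ∧ 0 < M a b) i j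

theorem IsGenerator.sum_vecMul_eq_zero [NonUnitalNonAssocSemiring R] [LE R] {M : Matrix ι ι R}
    (hM : M.IsGenerator) (y : ι → R) : ∑ j, (y ᵥ* M) j = 0 := by
  simp only [vecMul, dotProduct]
  rw [sum_comm]
  simp [← mul_sum, hM.sum_row_eq_zero]

section OrderedRing

variable [CommRing R] [LinearOrder R] [IsStrictOrderedRing R] {M : Matrix ι ι R}

theorem IsGenerator.diag_nonpos (hM : M.IsGenerator) (i : ι) : M i i ≤ 0 := by
  classical
  have hsum := hM.sum_row_eq_zero i
  rw [← add_sum_erase _ _ (mem_univ i)] at hsum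
  have : 0 ≤ ∑ j ∈ univ.erase i, M i j :=
    sum_nonneg fun j hj => hM.offDiag_nonneg i j (ne_of_mem_erase hj).symm
  linarith

theorem IsGenerator.vecMul_abs_nonneg (hM : M.IsGenerator) {x : ι → R} (hx : x ᵥ* M = 0)
    (j : ι) : 0 ≤ (|x| ᵥ* M) j := by
  classical
  have split : ∀ y : ι → R, (y ᵥ* M) j = y j * M j j + ∑ i ∈ univ.erase j, y i * M i j :=
    fun y => (add_sum_erase _ _ (mem_univ j)).symm
  have hxj : x j * M j j = -∑ i ∈ univ.erase j, x i * M i j := by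
    have hcol := split x
    rw [hx, Pi.zero_apply] at hcol
    linarith
  have htri : |x j| * |M j j| ≤ ∑ i ∈ univ.erase j, |x i| * M i j := calc
    |x j| * |M j j| = |∑ i ∈ univ.erase j, x i * M i j| := by rw [← abs_mul, hxj, abs_neg]
    _ ≤ ∑ i ∈ univ.erase j, |x i * M i j| := abs_sum_le_sum_abs _ _
    _ = ∑ i ∈ univ.erase j, |x i| * M i j := sum_congr rfl fun i hi => by
      rw [abs_mul, abs_of_nonneg (hM.offDiag_nonneg i j (ne_of_mem_erase hi))]
  rw [abs_of_nonpos (hM.diag_nonpos j)] at htri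
  rw [split]
  simp only [Pi.abs_apply]
  linarith

theorem IsGenerator.vecMul_abs_eq_zero (hM : M.IsGenerator) {x : ι → R} (hx : x ᵥ* M = 0) :
    |x| ᵥ* M = 0 := by
  have := (sum_eq_zero_iff_of_nonneg fun j _ => hM.vecMul_abs_nonneg hx j).mp
    (hM.sum_vecMul_eq_zero |x|)
  exact funext fun j => this j (mem_univ j)

theorem apply_eq_zero_of_vecMul_eq_zero (hoff : ∀ i j, i ≠ j → 0 ≤ M i j) {y : ι → R}
    (hy : 0 ≤ y) (hyM : y ᵥ* M = 0) {i j : ι} (hij : i ≠ j) (hMij : 0 < M i j)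
    (hj : y j = 0) : y i = 0 := by
  have hterm_nonneg : ∀ k ∈ univ, 0 ≤ y k * M k j := fun k _ => by
    rcases eq_or_ne k j with rfl | hkj
    · simp [hj]
    · exact mul_nonneg (hy k) (hoff k j hkj)
  have hcol : ∑ k, y k * M k j = 0 := congrFun hyM j
  have := (sum_eq_zero_iff_of_nonneg hterm_nonneg).mp hcol i (mem_univ i)
  exact (mul_eq_zero.mp this).resolve_right hMij.ne'

theorem eq_zero_or_pos_of_vecMul_eq_zero (hoff : ∀ i j, i ≠ j → 0 ≤ M i j)
    (hirr : M.OffDiagStronglyConnected) {y : ι → R} (hy : 0 ≤ y) (hyM : y ᵥ* M = 0) :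
    y = 0 ∨ ∀ i, 0 < y i := by
  have zero_of_path : ∀ i j, Relation.TransGen (fun a b => a ≠ b ∧ 0 < M a b) i j →
      y j = 0 → y i = 0 := by
    intro i j hpath
    induction hpath with
    | single hab => exact apply_eq_zero_of_vecMul_eq_zero hoff hy hyM hab.1 hab.2
    | tail _ hbc ih =>
      exact fun hc => ih (apply_eq_zero_of_vecMul_eq_zero hoff hy hyM hbc.1 hbc.2 hc)
  by_cases hzero : ∃ j, y j = 0
  · obtain ⟨j, hj⟩ := hzero
    left
    funext i
    rcases eq_or_ne i j with rfl | hij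
    · exact hj
    · exact zero_of_path i j (hirr i j hij) hj
  · exact Or.inr fun i => (hy i).lt_of_ne fun h => hzero ⟨i, h.symm⟩

theorem IsGenerator.pos_or_neg_of_vecMul_eq_zero (hM : M.IsGenerator)
    (hirr : M.OffDiagStronglyConnected) {x : ι → R} (hx : x ᵥ* M = 0) (hx0 : x ≠ 0) :
    (∀ i, 0 < x i) ∨ ∀ i, x i < 0 := by
  have habs := hM.vecMul_abs_eq_zero hx
  have hplus := eq_zero_or_pos_of_vecMul_eq_zero hM.offDiag_nonneg hirr (y := |x| + x)
    (fun i => by simpa [add_comm, neg_le_iff_add_nonneg] using neg_abs_le (x i))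
    (by rw [add_vecMul, habs, hx, add_zero])
  have hminus := eq_zero_or_pos_of_vecMul_eq_zero hM.offDiag_nonneg hirr (y := |x| - x)
    (fun i => by simpa using le_abs_self (x i))
    (by rw [sub_vecMul, habs, hx, sub_zero])
  rcases hplus with hplus | hplus
  · rcases hminus with hminus | hminus
    · refine absurd (funext fun i => ?_) hx0
      have h1 := congrFun hplus i
      have h2 := congrFun hminus i
      simp only [Pi.add_apply, Pi.sub_apply, Pi.abs_apply, Pi.zero_apply] at h1 h2 ⊢
      linarith
    · refine Or.inr fun i => ?_
      have := hminus i
      simp only [Pi.sub_apply, Pi.abs_apply] at this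
      rcases abs_cases (x i) with h | h <;> linarith [h.1]
  · refine Or.inl fun i => ?_
    have := hplus i
    simp only [Pi.add_apply, Pi.abs_apply] at this
    rcases abs_cases (x i) with h | h <;> linarith [h.1]

theorem IsGenerator.eq_zero_of_vecMul_eq_zero_of_sum_eq_zero (hM : M.IsGenerator)
    (hirr : M.OffDiagStronglyConnected) {x : ι → R} (hx : x ᵥ* M = 0) (hs : ∑ i, x i = 0) :
    x = 0 := by
  by_contra hx0
  obtain ⟨i, -⟩ := Function.ne_iff.mp hx0
  rcases hM.pos_or_neg_of_vecMul_eq_zero hirr hx hx0 with hpos | hneg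
  · exact (sum_pos (fun j _ => hpos j) ⟨i, mem_univ i⟩).ne' hs
  · exact (sum_neg (fun j _ => hneg j) ⟨i, mem_univ i⟩).ne hs

theorem IsGenerator.eq_of_vecMul_eq_zero_of_sum_eq (hM : M.IsGenerator)
    (hirr : M.OffDiagStronglyConnected) {x y : ι → R} (hx : x ᵥ* M = 0) (hy : y ᵥ* M = 0)
    (hs : ∑ i, x i = ∑ i, y i) : x = y :=
  sub_eq_zero.mp <| hM.eq_zero_of_vecMul_eq_zero_of_sum_eq_zero hirr
    (by rw [sub_vecMul, hx, hy, sub_zero]) (by simp [sum_sub_distrib, hs])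

theorem IsGenerator.pos_of_vecMul_eq_zero_of_sum_pos (hM : M.IsGenerator)
    (hirr : M.OffDiagStronglyConnected) {x : ι → R} (hx : x ᵥ* M = 0) (hs : 0 < ∑ i, x i) :
    ∀ i, 0 < x i := by
  have hx0 : x ≠ 0 := by
    rintro rfl
    simp at hs
  refine (hM.pos_or_neg_of_vecMul_eq_zero hirr hx hx0).resolve_right fun hneg => ?_
  exact (sum_nonpos fun i _ => (hneg i).le).not_gt hs

end OrderedRing

theorem IsGenerator.exists_vecMul_eq_zero_sum_eq_one [Nonempty ι] [Field R] [LinearOrder R]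
    [IsStrictOrderedRing R] {M : Matrix ι ι R} (hM : M.IsGenerator)
    (hirr : M.OffDiagStronglyConnected) : ∃ x : ι → R, x ᵥ* M = 0 ∧ ∑ i, x i = 1 := by
  classical
  have hdet : M.det = 0 := exists_mulVec_eq_zero_iff.mp
    ⟨1, one_ne_zero, funext fun i => by simp [mulVec, dotProduct, hM.sum_row_eq_zero]⟩
  obtain ⟨x, hx0, hx⟩ := exists_vecMul_eq_zero_iff.mpr hdet
  have hs : ∑ i, x i ≠ 0 := fun hs =>
    hx0 (hM.eq_zero_of_vecMul_eq_zero_of_sum_eq_zero hirr hx hs)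
  refine ⟨(∑ i, x i)⁻¹ • x, by rw [smul_vecMul, hx, smul_zero], ?_⟩
  simp [← mul_sum, inv_mul_cancel₀ hs]

end Matrix

/-- If `M` is an irreducible generator matrix, then the system
`xM = 0`, `x𝟏 = 1` has a unique solution, and it has strictly positive entries. -/
theorem stmt8 (n : ℕ) (hn : 0 < n) (M : Matrix (Fin n) (Fin n) ℝ)
    (hoff : ∀ i j, i ≠ j → 0 ≤ M i j)
    (hrow : ∀ i, ∑ j, M i j = 0)
    (hirr : ∀ i j : Fin n, i ≠ j →
      Relation.TransGen (fun a b : Fin n => a ≠ b ∧ 0 < M a b) i j) :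
    (∃! x : Fin n → ℝ, Matrix.vecMul x M = 0 ∧ ∑ i, x i = 1) ∧
    (∀ x : Fin n → ℝ, Matrix.vecMul x M = 0 → ∑ i, x i = 1 → ∀ i, 0 < x i) := by
  have hM : M.IsGenerator := ⟨hoff, hrow⟩
  have : Nonempty (Fin n) := ⟨⟨0, hn⟩⟩
  obtain ⟨x, hx⟩ := hM.exists_vecMul_eq_zero_sum_eq_one hirr
  refine ⟨⟨x, hx, fun y hy => ?_⟩, fun y hy hs => ?_⟩
  · exact hM.eq_of_vecMul_eq_zero_of_sum_eq hirr hy.1 hx.1 (hy.2.trans hx.2.symm)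
  · exact hM.pos_of_vecMul_eq_zero_of_sum_pos hirr hy (hs ▸ one_pos)
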